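/- Let F be an n×n real matrix with all entries nonnegative, and let V be an n×n real matrix that is Metzler and Hurwitz. Write V = V_od - V_d, where V_d ≥ 0 is the diagonal matrix with the same diagonal as -V, and V_od ≥ 0 equals V with its diagonal set to zero. Then ρ(F V⁻¹) = inf { r ∈ ℝ : r > 0 and there exists a vector w ∈ ℝⁿ with all entries strictly positive such that (F + r V_od) w ≤ r V_d w entrywise } (the geometric-program characterization of the basic reproduction number). -/

import Mathlib

/-!
If `w > 0` satisfies `F w + r V w ≤ 0` and `μ` is an eigenvalue of `F V⁻¹` with `‖μ‖ > r`, then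
perturbing `w` along `V⁻¹ (-1)` makes `F w + ‖μ‖ V w < 0` strict. The moduli of the entries of
`μ V - F` are bounded above by `F + ‖μ‖ V` off the diagonal and below by `-(F + ‖μ‖ V)` on it, so
`μ V - F` is strictly diagonally dominant after scaling its columns by `w`; by Gershgorin it is
nonsingular, contradicting `det (μ V - F) = det (μ - F V⁻¹) det V = 0`.

Conversely, for `r > ρ(F V⁻¹)` the Neumann series, which converges by Gelfand's formula, shows
that `(-V)⁻¹` and `(r - F (-V)⁻¹)⁻¹` are nonnegative, hence so is `(r (-V) - F)⁻¹`, and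
`w = (r (-V) - F)⁻¹ 1` is a positive vector with `F w + r V w = -1`.
-/

open Matrix

/-- A square real matrix is *Metzler* if all its off-diagonal entries are nonnegative. -/
def IsMetzler {n : ℕ} (A : Matrix (Fin n) (Fin n) ℝ) : Prop :=
  ∀ i j, i ≠ j → 0 ≤ A i j

/-- A square real matrix is *Hurwitz* if every complex eigenvalue has negative real part. -/
def IsHurwitz {n : ℕ} (A : Matrix (Fin n) (Fin n) ℝ) : Prop :=
  ∀ μ ∈ spectrum ℂ (A.map Complex.ofReal), μ.re < 0

/-- The spectral radius of a square real matrix: the maximum modulus of its complex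
eigenvalues. -/
noncomputable def specRad {n : ℕ} (A : Matrix (Fin n) (Fin n) ℝ) : ℝ :=
  sSup {x : ℝ | ∃ μ ∈ spectrum ℂ (A.map Complex.ofReal), x = ‖μ‖}

open Filter Topology
open scoped ENNReal

theorem summable_pow_of_forall_norm_lt_one {A : Type*} [NormedRing A] [NormedAlgebra ℂ A]
    [CompleteSpace A] {a : A} (h : ∀ μ ∈ spectrum ℂ a, ‖μ‖ < 1) : Summable (a ^ ·) := by
  have hρ : spectralRadius ℂ a < 1 := by
    rcases (spectrum ℂ a).eq_empty_or_nonempty with hσ | hσ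
    · simp [spectralRadius, hσ]
    · exact_mod_cast spectrum.spectralRadius_lt_of_forall_lt_of_nonempty hσ
        (r := 1) fun μ hμ => mod_cast h μ hμ
  obtain ⟨q, hρq, hq1⟩ := ENNReal.lt_iff_exists_nnreal_btwn.mp hρ
  refine Summable.of_norm_bounded_eventually_nat
    (summable_geometric_of_lt_one q.coe_nonneg (mod_cast hq1)) ?_
  filter_upwards
    [(spectrum.pow_nnnorm_pow_one_div_tendsto_nhds_spectralRadius a).eventually_lt_const hρq,
      eventually_ge_atTop 1] with k hk hk1
  have hk0 : (0 : ℝ) < k := by exact_mod_cast hk1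
  have : (‖a ^ k‖₊ : ℝ≥0∞) ≤ (q : ℝ≥0∞) ^ k := by
    calc (‖a ^ k‖₊ : ℝ≥0∞) = ((‖a ^ k‖₊ : ℝ≥0∞) ^ (1 / (k : ℝ))) ^ (k : ℝ) := by
          rw [← ENNReal.rpow_mul, one_div, inv_mul_cancel₀ hk0.ne', ENNReal.rpow_one]
      _ ≤ (q : ℝ≥0∞) ^ (k : ℝ) := ENNReal.rpow_le_rpow hk.le hk0.le
      _ = (q : ℝ≥0∞) ^ k := ENNReal.rpow_natCast _ k
  exact_mod_cast this

theorem Complex.eventually_norm_add_lt {ν : ℂ} (h : ν.re < 0) :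
    ∀ᶠ s : ℝ in atTop, ‖ν + s‖ < s := by
  filter_upwards [eventually_gt_atTop (‖ν‖ ^ 2 / (-2 * ν.re)), eventually_gt_atTop 0] with s hs hs0
  rw [div_lt_iff₀ (by linarith)] at hs
  refine lt_of_pow_lt_pow_left₀ 2 hs0.le ?_
  rw [Complex.sq_norm, Complex.normSq_apply] at hs ⊢
  simp only [Complex.add_re, Complex.ofReal_re, Complex.add_im, Complex.ofReal_im, add_zero]
  nlinarith

theorem eventually_add_mul_neg {a b : ℝ} (ha : a ≤ 0) (hb : a = 0 → b < 0) :
    ∀ᶠ ε in 𝓝[>] 0, a + ε * b < 0 := by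
  rcases ha.lt_or_eq with ha | rfl
  · have : Tendsto (fun ε => a + ε * b) (𝓝 0) (𝓝 a) :=
      Continuous.tendsto' (by fun_prop) 0 a (by simp)
    exact (this.mono_left nhdsWithin_le_nhds).eventually_lt_const ha
  · filter_upwards [self_mem_nhdsWithin] with ε hε
    simpa using mul_neg_of_pos_of_neg hε (hb rfl)

namespace Matrix

variable {ι : Type*} [Fintype ι]

theorem apply_eq_zero_of_mulVec_apply_eq_zero {F : Matrix ι ι ℝ} {w : ι → ℝ} {i : ι}
    (hF : ∀ j, 0 ≤ F i j) (hw : ∀ j, 0 < w j) (h : (F *ᵥ w) i = 0) (j : ι) : F i j = 0 := by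
  have := (Finset.sum_eq_zero_iff_of_nonneg fun k _ => mul_nonneg (hF k) (hw k).le).mp h j
    (Finset.mem_univ j)
  exact (mul_eq_zero.mp this).resolve_right (hw j).ne'

theorem mul_apply_nonneg {A B : Matrix ι ι ℝ} (hA : ∀ i j, 0 ≤ A i j) (hB : ∀ i j, 0 ≤ B i j)
    (i j : ι) : 0 ≤ (A * B) i j :=
  Finset.sum_nonneg fun k _ => mul_nonneg (hA i k) (hB k j)

theorem exists_pos_strict_of_lt {F V : Matrix ι ι ℝ} (hF : ∀ i j, 0 ≤ F i j)
    {u w : ι → ℝ} (hu : ∀ i, (V *ᵥ u) i < 0) (hw : ∀ i, 0 < w i) {r m : ℝ} (hr : 0 < r)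
    (hrm : r < m) (hrw : ∀ i, (F *ᵥ w) i + r * (V *ᵥ w) i ≤ 0) :
    ∃ w' : ι → ℝ, (∀ i, 0 < w' i) ∧ ∀ i, (F *ᵥ w') i + m * (V *ᵥ w') i < 0 := by
  have key : ∀ i, ∀ᶠ ε in 𝓝[>] 0, 0 < w i + ε * u i ∧
      ((F *ᵥ w) i + m * (V *ᵥ w) i) + ε * ((F *ᵥ u) i + m * (V *ᵥ u) i) < 0 := by
    intro i
    have hFw : 0 ≤ (F *ᵥ w) i := Finset.sum_nonneg fun j _ => mul_nonneg (hF i j) (hw j).le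
    have hVw : (V *ᵥ w) i ≤ 0 := by nlinarith [hrw i]
    have hpos := eventually_add_mul_neg (b := -u i) (neg_nonpos.mpr (hw i).le)
      fun h => by linarith [hw i]
    refine (hpos.mono fun ε h => by linarith).and
      (eventually_add_mul_neg (by nlinarith [hrw i]) fun h0 => ?_)
    -- a tight row has `(F w) i = 0`, so row `i` of `F` vanishes and `m (V u) i < 0` is left
    have hFw0 : (F *ᵥ w) i = 0 := by nlinarith [hrw i]
    have hFu : (F *ᵥ u) i = 0 := Finset.sum_eq_zero fun j _ => by
      simp [apply_eq_zero_of_mulVec_apply_eq_zero (hF i) hw hFw0 j]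
    nlinarith [hu i]
  obtain ⟨ε, hε⟩ := (eventually_all.2 key).exists
  refine ⟨w + ε • u, fun i => (hε i).1, fun i => ?_⟩
  simp only [mulVec_add, mulVec_smul, Pi.add_apply, Pi.smul_apply, smul_eq_mul]
  linarith [(hε i).2]

variable [DecidableEq ι]

theorem summable_pow_of_forall_norm_lt_one {B : Matrix ι ι ℝ}
    (h : ∀ μ ∈ spectrum ℂ (B.map Complex.ofReal), ‖μ‖ < 1) : Summable (B ^ ·) := by
  -- any Banach algebra norm will do: `Summable` only sees the product topology
  let _ := Matrix.linftyOpNormedRing (n := ι) (α := ℂ)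
  let _ := Matrix.linftyOpNormedAlgebra (n := ι) (R := ℂ) (α := ℂ)
  have hre : ∀ k : ℕ, B ^ k = (B.map Complex.ofReal ^ k).map Complex.re := fun k => by
    rw [show B.map Complex.ofReal = B.map Complex.ofRealHom from rfl, ← Matrix.map_pow,
      Matrix.map_map]
    ext; simp
  have := (_root_.summable_pow_of_forall_norm_lt_one h).map
    (Complex.reAddGroupHom.mapMatrix (m := ι) (n := ι))
    (continuous_id.matrix_map Complex.continuous_re)
  simpa [Function.comp_def, hre] using this

theorem inv_smul_one_sub_nonneg {B : Matrix ι ι ℝ} (hB : ∀ i j, 0 ≤ B i j) {s : ℝ} (hs : 0 < s)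
    (h : ∀ μ ∈ spectrum ℂ (B.map Complex.ofReal), ‖μ‖ < s) :
    IsUnit (s • 1 - B).det ∧ ∀ i j, 0 ≤ (s • 1 - B)⁻¹ i j := by
  set A := s⁻¹ • B
  have hA : Summable (A ^ ·) := by
    refine summable_pow_of_forall_norm_lt_one fun μ hμ => ?_
    let u : ℂˣ := Units.mk0 s (mod_cast hs.ne')
    have hmap : A.map Complex.ofReal = u⁻¹ • B.map Complex.ofReal := by
      ext; simp [A, u, Units.smul_def]
    have hsμ : u • μ ∈ spectrum ℂ (B.map Complex.ofReal) := by
      have := (spectrum.smul_mem_smul_iff (r := u)).mpr (hmap ▸ hμ)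
      rwa [smul_inv_smul] at this
    replace hsμ := h _ hsμ
    rw [Units.smul_def, norm_smul, Units.val_mk0, Complex.norm_real,
      Real.norm_of_nonneg hs.le] at hsμ
    exact (mul_lt_iff_lt_one_right hs).mp hsμ
  have hinv : (s • 1 - B) * (s⁻¹ • ∑' k, A ^ k) = 1 := by
    have : s • 1 - B = s • (1 - A) := by simp [A, smul_sub, smul_smul, hs.ne']
    rw [this, smul_mul_smul_comm, mul_inv_cancel₀ hs.ne', one_smul, hA.one_sub_mul_tsum_pow]
  refine ⟨isUnit_det_of_right_inverse hinv, fun i j => ?_⟩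
  rw [inv_eq_right_inv hinv, smul_apply, smul_eq_mul]
  refine mul_nonneg (inv_nonneg.mpr hs.le) ((Pi.hasSum.mp (Pi.hasSum.mp hA.hasSum i) j).nonneg ?_)
  exact fun k => pow_apply_nonneg (fun i j => mul_nonneg (inv_nonneg.mpr hs.le) (hB i j)) k i j

theorem exists_pos_mulVec_eq_one {M : Matrix ι ι ℝ} (hM : IsUnit M.det)
    (hinv : ∀ i j, 0 ≤ M⁻¹ i j) : ∃ w : ι → ℝ, (∀ i, 0 < w i) ∧ M *ᵥ w = 1 := by
  refine ⟨M⁻¹ *ᵥ 1, fun i => ?_, by rw [mulVec_mulVec, mul_nonsing_inv _ hM, one_mulVec]⟩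
  refine (Finset.sum_nonneg fun j _ => mul_nonneg (hinv i j) zero_le_one).lt_of_ne' fun h0 => ?_
  have hrow := apply_eq_zero_of_mulVec_apply_eq_zero (hinv i) (fun _ => zero_lt_one) h0
  have := congrFun (congrFun (nonsing_inv_mul M hM) i) i
  simp [mul_apply, hrow] at this

theorem det_ne_zero_of_weighted_sum_row_lt_diag {𝕜 : Type*} [RCLike 𝕜] {A : Matrix ι ι 𝕜}
    {w : ι → ℝ} (hw : ∀ i, 0 < w i)
    (h : ∀ k, ∑ j ∈ Finset.univ.erase k, ‖A k j‖ * w j < ‖A k k‖ * w k) : A.det ≠ 0 := by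
  have hAw := det_ne_zero_of_sum_row_lt_diag (A := A * diagonal fun i => (w i : 𝕜)) fun k => by
    simpa [mul_diagonal, Real.norm_of_nonneg (hw _).le] using h k
  rw [det_mul] at hAw
  exact left_ne_zero_of_mul hAw

theorem det_ne_zero_of_le_comparison {𝕜 : Type*} [RCLike 𝕜] {A : Matrix ι ι 𝕜}
    {G : Matrix ι ι ℝ} {w : ι → ℝ} (hw : ∀ i, 0 < w i)
    (hoff : ∀ i j, i ≠ j → ‖A i j‖ ≤ G i j) (hdiag : ∀ i, -G i i ≤ ‖A i i‖)
    (hGw : ∀ i, (G *ᵥ w) i < 0) : A.det ≠ 0 := by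
  refine det_ne_zero_of_weighted_sum_row_lt_diag hw fun k => ?_
  have hsplit := Finset.add_sum_erase Finset.univ (fun j => G k j * w j) (Finset.mem_univ k)
  calc ∑ j ∈ Finset.univ.erase k, ‖A k j‖ * w j
      ≤ ∑ j ∈ Finset.univ.erase k, G k j * w j :=
        Finset.sum_le_sum fun j hj =>
          mul_le_mul_of_nonneg_right (hoff k j (Finset.ne_of_mem_erase hj).symm) (hw j).le
    _ < -G k k * w k := by
        have := hGw k
        simp only [mulVec, dotProduct] at this
        linarith
    _ ≤ ‖A k k‖ * w k := mul_le_mul_of_nonneg_right (hdiag k) (hw k).le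

theorem det_smul_map_sub_eq_zero_of_mem_spectrum {F V : Matrix ι ι ℝ} (hV : IsUnit V.det)
    {μ : ℂ} (hμ : μ ∈ spectrum ℂ ((F * V⁻¹).map Complex.ofReal)) :
    (μ • V.map Complex.ofReal - F.map Complex.ofReal).det = 0 := by
  have hFV : (F * V⁻¹).map Complex.ofReal * V.map Complex.ofReal = F.map Complex.ofReal := by
    have := (Matrix.map_mul (L := F * V⁻¹) (M := V) (f := Complex.ofRealHom)).symm
    rwa [nonsing_inv_mul_cancel_right _ _ hV] at this
  have hfac : μ • V.map Complex.ofReal - F.map Complex.ofReal =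
      (algebraMap ℂ _ μ - (F * V⁻¹).map Complex.ofReal) * V.map Complex.ofReal := by
    rw [sub_mul, hFV, Algebra.algebraMap_eq_smul_one, smul_one_mul]
  rw [spectrum.mem_iff, isUnit_iff_isUnit_det, isUnit_iff_ne_zero, not_not] at hμ
  rw [hfac, det_mul, hμ, zero_mul]

end Matrix

theorem geometric_program_constraint_iff {ι : Type*} [Fintype ι] [DecidableEq ι]
    (F V : Matrix ι ι ℝ) (r : ℝ) (w : ι → ℝ) (i : ι) :
    ((F + r • Matrix.of fun i j => if i = j then 0 else V i j) *ᵥ w) i ≤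
        r * (diagonal (fun i => -(V i i)) *ᵥ w) i ↔
      (F *ᵥ w) i + r * (V *ᵥ w) i ≤ 0 := by
  have hV : V = (Matrix.of fun i j => if i = j then 0 else V i j) - diagonal fun i => -(V i i) := by
    ext i j
    by_cases h : i = j <;> simp [h]
  conv_rhs => rw [hV]
  simp only [add_mulVec, sub_mulVec, smul_mulVec, Pi.add_apply, Pi.sub_apply, Pi.smul_apply,
    smul_eq_mul]
  constructor <;> intro h <;> linarith

variable {n : ℕ}

theorem norm_le_specRad {A : Matrix (Fin n) (Fin n) ℝ} {μ : ℂ}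
    (hμ : μ ∈ spectrum ℂ (A.map Complex.ofReal)) : ‖μ‖ ≤ specRad A := by
  refine le_csSup
    (((Matrix.finite_spectrum (A.map Complex.ofReal)).image fun ν : ℂ => ‖ν‖).bddAbove.mono ?_)
    ⟨μ, hμ, rfl⟩
  rintro _ ⟨ν, hν, rfl⟩
  exact ⟨ν, hν, rfl⟩

theorem specRad_nonneg (A : Matrix (Fin n) (Fin n) ℝ) : 0 ≤ specRad A :=
  Real.sSup_nonneg (by rintro _ ⟨μ, -, rfl⟩; exact norm_nonneg μ)

theorem specRad_le {A : Matrix (Fin n) (Fin n) ℝ} {r : ℝ} (hr : 0 ≤ r)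
    (h : ∀ μ ∈ spectrum ℂ (A.map Complex.ofReal), ‖μ‖ ≤ r) : specRad A ≤ r :=
  Real.sSup_le (by rintro _ ⟨μ, hμ, rfl⟩; exact h μ hμ) hr

theorem IsHurwitz.isUnit_det {V : Matrix (Fin n) (Fin n) ℝ} (hH : IsHurwitz V) :
    IsUnit V.det := by
  have h0 : (0 : ℂ) ∉ spectrum ℂ (V.map Complex.ofReal) := fun h => by simpa using hH 0 h
  rw [spectrum.zero_notMem_iff, isUnit_iff_isUnit_det,
    show (V.map Complex.ofReal).det = Complex.ofRealHom V.det from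
      (RingHom.map_det Complex.ofRealHom V).symm] at h0
  exact (isUnit_map_iff Complex.ofRealHom _).mp h0

theorem IsMetzler.inv_neg_nonneg {V : Matrix (Fin n) (Fin n) ℝ} (hM : IsMetzler V)
    (hH : IsHurwitz V) : IsUnit (-V).det ∧ ∀ i j, 0 ≤ (-V)⁻¹ i j := by
  -- `-V = s • 1 - (V + s • 1)`, with `V + s • 1 ≥ 0` of spectral radius `< s` once `s` is large
  obtain ⟨s, hs0, hdiag, hσ⟩ : ∃ s : ℝ, 0 < s ∧ (∀ i, -V i i ≤ s) ∧
      ∀ ν ∈ spectrum ℂ (V.map Complex.ofReal), ‖ν + s‖ < s :=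
    ((eventually_gt_atTop 0).and ((eventually_all.2 fun i => eventually_ge_atTop (-V i i)).and
      ((Matrix.finite_spectrum _).eventually_all.2 fun ν hν =>
        Complex.eventually_norm_add_lt (hH ν hν)))).exists
  have hB : ∀ i j, 0 ≤ (V + s • 1) i j := by
    intro i j
    rcases eq_or_ne i j with rfl | hij
    · simp only [Matrix.add_apply, Matrix.smul_apply, one_apply_eq, smul_eq_mul, mul_one]
      linarith [hdiag i]
    · simpa [one_apply_ne hij] using hM i j hij
  have hσB : ∀ μ ∈ spectrum ℂ ((V + s • 1).map Complex.ofReal), ‖μ‖ < s := by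
    intro μ hμ
    have hmap : (V + s • 1).map Complex.ofReal =
        algebraMap ℂ _ (s : ℂ) + V.map Complex.ofReal := by
      ext i j
      rcases eq_or_ne i j with rfl | hij <;> simp [*, algebraMap_eq_diagonal, add_comm]
    rw [hmap, ← sub_add_cancel μ s, spectrum.add_mem_add_iff] at hμ
    simpa using hσ _ hμ
  simpa using Matrix.inv_smul_one_sub_nonneg hB hs0 hσB

theorem IsMetzler.det_smul_map_sub_ne_zero {F V : Matrix (Fin n) (Fin n) ℝ}
    (hF : ∀ i j, 0 ≤ F i j) (hV : IsMetzler V) {w : Fin n → ℝ} (hw : ∀ i, 0 < w i) {μ : ℂ}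
    (h : ∀ i, (F *ᵥ w) i + ‖μ‖ * (V *ᵥ w) i < 0) :
    (μ • V.map Complex.ofReal - F.map Complex.ofReal).det ≠ 0 := by
  refine det_ne_zero_of_le_comparison (G := F + ‖μ‖ • V) hw (fun i j hij => ?_) (fun i => ?_)
    fun i => by simpa [add_mulVec, smul_mulVec] using h i
  · have hVij := hV i j hij
    calc ‖(μ • V.map Complex.ofReal - F.map Complex.ofReal) i j‖
        ≤ ‖μ * V i j‖ + ‖(F i j : ℂ)‖ := by simpa using norm_sub_le (μ * V i j) (F i j : ℂ)
      _ = (F + ‖μ‖ • V) i j := by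
        simp [Complex.norm_real, abs_of_nonneg hVij, abs_of_nonneg (hF i j)]; ring
  · calc -(F + ‖μ‖ • V) i i ≤ ‖μ * V i i‖ - ‖(F i i : ℂ)‖ := by
          simp [Complex.norm_real, abs_of_nonneg (hF i i)]
          nlinarith [neg_abs_le (V i i), norm_nonneg μ]
      _ ≤ ‖(μ • V.map Complex.ofReal - F.map Complex.ofReal) i i‖ := by
        simpa using norm_sub_norm_le (μ * V i i) (F i i : ℂ)

section GeometricProgram

variable {F V : Matrix (Fin n) (Fin n) ℝ}

theorem specRad_le_of_exists_pos (hF : ∀ i j, 0 ≤ F i j) (hM : IsMetzler V) (hH : IsHurwitz V)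
    {r : ℝ} (hr : 0 < r) {w : Fin n → ℝ} (hw : ∀ i, 0 < w i)
    (hrw : ∀ i, (F *ᵥ w) i + r * (V *ᵥ w) i ≤ 0) : specRad (F * V⁻¹) ≤ r := by
  refine specRad_le hr.le fun μ hμ => le_of_not_gt fun hμr => ?_
  have hV := hH.isUnit_det
  have hu : ∀ i, (V *ᵥ (V⁻¹ *ᵥ -1)) i < 0 := by
    simp [mulVec_mulVec, mul_nonsing_inv _ hV]
  obtain ⟨w', hw', hstrict⟩ := exists_pos_strict_of_lt hF hu hw hr hμr hrw
  exact hM.det_smul_map_sub_ne_zero hF hw' hstrict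
    (det_smul_map_sub_eq_zero_of_mem_spectrum hV hμ)

theorem exists_pos_of_specRad_lt (hF : ∀ i j, 0 ≤ F i j) (hM : IsMetzler V) (hH : IsHurwitz V)
    {r : ℝ} (hr : specRad (F * V⁻¹) < r) :
    ∃ w : Fin n → ℝ, (∀ i, 0 < w i) ∧ ∀ i, (F *ᵥ w) i + r * (V *ᵥ w) i ≤ 0 := by
  obtain ⟨hNdet, hN⟩ := hM.inv_neg_nonneg hH
  have hinv_neg : (-V)⁻¹ = -V⁻¹ :=
    inv_eq_left_inv (by rw [neg_mul_neg, nonsing_inv_mul _ hH.isUnit_det])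
  set K := F * (-V)⁻¹ with hKdef
  have hKσ : ∀ ν ∈ spectrum ℂ (K.map Complex.ofReal), ‖ν‖ < r := by
    intro ν hν
    rw [hKdef, hinv_neg, Matrix.mul_neg, Matrix.map_neg _ Complex.ofReal_neg,
      ← spectrum.neg_eq] at hν
    simpa using (norm_le_specRad hν).trans_lt hr
  obtain ⟨hKdet, hKinv⟩ :=
    inv_smul_one_sub_nonneg (mul_apply_nonneg hF hN) ((specRad_nonneg _).trans_lt hr) hKσ
  have hMm : (r • 1 - K) * -V = r • -V - F := by
    rw [Matrix.sub_mul, smul_one_mul, Matrix.mul_assoc, nonsing_inv_mul _ hNdet, Matrix.mul_one]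
  obtain ⟨w, hw, hMw⟩ := exists_pos_mulVec_eq_one (M := r • -V - F)
    (by rw [← hMm, det_mul]; exact hKdet.mul hNdet)
    (by
      rw [← hMm, Matrix.mul_inv_rev]
      exact mul_apply_nonneg hN hKinv)
  refine ⟨w, hw, fun i => ?_⟩
  have := congrFun hMw i
  simp only [sub_mulVec, smul_mulVec, neg_mulVec, Pi.sub_apply, Pi.smul_apply, Pi.neg_apply,
    smul_eq_mul, Pi.one_apply] at this
  linarith

end GeometricProgram

theorem specRad_eq_sInf_geometric_program_general {n : ℕ} (F V : Matrix (Fin n) (Fin n) ℝ)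
    (hF : ∀ i j, 0 ≤ F i j) (hVmetzler : IsMetzler V) (hVhurwitz : IsHurwitz V)
    (Vd Vod : Matrix (Fin n) (Fin n) ℝ)
    (hVd : Vd = Matrix.diagonal (fun i => -(V i i)))
    (hVod : Vod = Matrix.of fun i j => if i = j then 0 else V i j) :
    specRad (F * V⁻¹) =
      sInf {r : ℝ | 0 < r ∧ ∃ w : Fin n → ℝ, (∀ i, 0 < w i) ∧
        ∀ i, ((F + r • Vod) *ᵥ w) i ≤ r * (Vd *ᵥ w) i} := by
  subst hVd hVod
  simp only [geometric_program_constraint_iff]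
  have hmem : ∀ r, specRad (F * V⁻¹) < r → 0 < r ∧ ∃ w : Fin n → ℝ, (∀ i, 0 < w i) ∧
      ∀ i, (F *ᵥ w) i + r * (V *ᵥ w) i ≤ 0 := fun r hr =>
    ⟨(specRad_nonneg _).trans_lt hr, exists_pos_of_specRad_lt hF hVmetzler hVhurwitz hr⟩
  refine le_antisymm (le_csInf ⟨_, hmem _ (lt_add_one _)⟩ ?_) ?_
  · rintro r ⟨hr, w, hw, hrw⟩
    exact specRad_le_of_exists_pos hF hVmetzler hVhurwitz hr hw hrw
  · exact le_of_forall_gt_imp_ge_of_dense fun r hr =>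
      csInf_le ⟨0, fun r hr => hr.1.le⟩ (hmem r hr)

/-- Geometric-program characterization of the basic reproduction number. Writing
`V = V_od - V_d` with `V_d` the diagonal matrix with diagonal `-diag(V)` and `V_od`
equal to `V` with its diagonal set to zero,
`ρ(F V⁻¹) = inf { r > 0 : ∃ w > 0 with (F + r V_od) w ≤ r V_d w entrywise }`. -/
theorem specRad_eq_sInf_geometric_program {n : ℕ} (F V : Matrix (Fin n) (Fin n) ℝ)
    (hF : ∀ i j, 0 ≤ F i j) (hVmetzler : IsMetzler V) (hVhurwitz : IsHurwitz V)
    (Vd Vod : Matrix (Fin n) (Fin n) ℝ)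
    (hVd : Vd = Matrix.diagonal (fun i => -(V i i)))
    (hVod : Vod = Matrix.of fun i j => if i = j then 0 else V i j)
    (hVdnonneg : ∀ i j, 0 ≤ Vd i j) (hVodnonneg : ∀ i j, 0 ≤ Vod i j) :
    specRad (F * V⁻¹) =
      sInf {r : ℝ | 0 < r ∧ ∃ w : Fin n → ℝ, (∀ i, 0 < w i) ∧
        ∀ i, ((F + r • Vod) *ᵥ w) i ≤ r * (Vd *ᵥ w) i} :=
  specRad_eq_sInf_geometric_program_general F V hF hVmetzler hVhurwitz Vd Vod hVd hVod
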